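/- For k ≥ r ≥ 3 and m ≥ 0, let π be a partition in C_<(k,r|p,t) where p + t = m. Then there do not exist integers p' and t' with p' ≠ p, t' ≠ t, p' + t' = m and π ∈ C_<(k,r|p',t'). In other words, for each partition in C_<(k,r|m) = ⋃_{p+t=m} C_<(k,r|p,t), the pair (p,t) with p+t = m and π ∈ C_<(k,r|p,t) is unique. -/

import Mathlib

namespace Bressoud

/-- A partition: a weakly decreasing list of positive integers. -/
structure Partition where
  parts : List ℕ
  pos : ∀ x ∈ parts, 0 < x
  sorted : parts.Pairwise (· ≥ ·)

namespace Partition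

/-- `|π|`, the sum of the parts of `π`. -/
def size (π : Partition) : ℕ := π.parts.sum

/-- `ℓ(π)`, the number of parts of `π`. -/
def numParts (π : Partition) : ℕ := π.parts.length

end Partition

lemma exists_pos_not_mem (s : List ℕ) : ∃ n, 0 < n ∧ n ∉ s := by
  refine ⟨s.sum + 1, Nat.succ_pos _, fun h => ?_⟩
  have := List.single_le_sum (l := s) (fun x _ => Nat.zero_le x) _ h
  omega

/-- The least positive integer not occurring in `s`. -/
def mex1 (s : List ℕ) : ℕ := Nat.find (exists_pos_not_mem s)

/-- Parts `p ≥ q` conflict (must receive different marks) when `p - q ≤ 2`,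
with strict inequality when `p` is odd. -/
def conflict (p q : ℕ) : Bool :=
  if p % 2 = 1 then decide (p - q < 2) else decide (p - q ≤ 2)

/-- Greedy computation of the Göllnitz–Gordon marking: the parts are processed
from smallest to largest (second argument: remaining parts in increasing
order; first argument: already processed parts with their marks), and each
part receives the least positive mark different from the marks of all already
processed conflicting parts. -/
def ggAux : List (ℕ × ℕ) → List ℕ → List (ℕ × ℕ)
  | acc, [] => acc
  | acc, p :: rest =>
      ggAux ((p, mex1 ((acc.filter fun q => conflict p q.1).map Prod.snd)) :: acc) rest

/-- The Göllnitz–Gordon marking `GG(π)` of `π`, as a list of (part, mark)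
pairs in decreasing order of parts. -/
def ggMarks (π : Partition) : List (ℕ × ℕ) := ggAux [] π.parts.reverse

/-- There is an `m`-marked part equal to `x` in `GG(π)`. -/
def Marked (π : Partition) (x m : ℕ) : Prop := (x, m) ∈ ggMarks π

instance (π : Partition) (x m : ℕ) : Decidable (Marked π x m) := by
  unfold Marked; infer_instance

/-- The `i`-th row of `GG(π)`: the `i`-marked parts, in decreasing order. -/
def row (π : Partition) (i : ℕ) : List ℕ :=
  ((ggMarks π).filter fun q => q.2 == i).map Prod.fst

/-- `N_i(π)`: the number of `i`-marked parts of `π`. -/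
def Nmk (π : Partition) (i : ℕ) : ℕ := (row π i).length

/-- `π^{(i)}_j` as a natural number (meaningful for `1 ≤ j ≤ N_i(π)`;
junk value `0` otherwise). -/
def nth (π : Partition) (i j : ℕ) : ℕ := (row π i).getD (j - 1) 0

/-- The canonical embedding of the natural numbers into `EReal`. -/
noncomputable def natE (n : ℕ) : EReal := ((n : ℝ) : EReal)

/-- `π^{(i)}_j` as an extended real, with the conventions `π^{(i)}_0 = +∞`
and `π^{(i)}_j = -∞` for `j > N_i(π)`. -/
noncomputable def rowVal (π : Partition) (i j : ℕ) : EReal :=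
  if j = 0 then ⊤
  else
    match (row π i)[j - 1]? with
    | some x => natE x
    | none => ⊥

/-- The largest `l ≥ 0` such that there is no odd part of `π` greater than or
equal to `π^{(2)}_l` (the indices `1 ≤ j ≤ N₂(π)` with this property form an
initial segment, so this is also their number). -/
def bigL (π : Partition) : ℕ :=
  ((List.range' 1 (Nmk π 2)).filter fun j =>
    decide (∀ x ∈ π.parts, x % 2 = 1 → x < nth π 2 j)).length

/-- `startPair π b = (starting type of π^{(2)}_b, s_b(π))` for `1 ≤ b ≤ N₂(π)`.
Starting types are encoded by integers: `-1` stands for `s₋₁`, and `0,1,2,3`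
for `s₀,s₁,s₂,s₃`; the value `9` is a junk value used when no case applies. -/
def startPair (π : Partition) : ℕ → ℤ × ℕ
  | 0 => (9, 0)
  | b + 1 =>
    let v := nth π 2 (b + 1)
    if bigL π < b + 1 then (-1, 0)
    else
      let okLow : Bool :=
        if b = 0 then !decide ((v + 2) ∈ π.parts)
        else !decide (Marked π (v + 2) 1) || decide ((startPair π b).2 = v + 2)
      let ok2 : Bool :=
        if b = 0 then decide (Marked π (v + 2) 1)
        else decide (Marked π (v + 2) 1) && !decide ((startPair π b).2 = v + 2)
      if decide (Marked π (v - 1) 1) && okLow then (0, v - 1)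
      else if decide (Marked π (v - 2) 1) && okLow then (1, v - 2)
      else if ok2 then (2, v + 2)
      else if decide (Marked π v 1) then (3, v)
      else (9, 0)

/-- The starting type of `π^{(2)}_b`, encoded as an integer. -/
def startType (π : Partition) (b : ℕ) : ℤ := (startPair π b).1

/-- The set `C(k,r)`: partitions with no repeated odd part, in which the parts
equal to `1` and `2` have marks at most `r - 1`, and whose Göllnitz–Gordon
marking has at most `k - 1` rows. -/
def C (k r : ℕ) : Set Partition :=
  { π | (∀ x, x % 2 = 1 → π.parts.count x ≤ 1) ∧
        (∀ x m, Marked π x m → x ≤ 2 → m ≤ r - 1) ∧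
        (∀ x m, Marked π x m → m ≤ k - 1) }

/-- The set `C_<(k,r|p,t)`. -/
noncomputable def Clt (k r p t : ℕ) : Set Partition :=
  { π | π ∈ C k r ∧
        (∀ x ∈ π.parts, x % 2 = 1 → x < 2 * t + 1) ∧
        rowVal π 2 (p + 1) < natE (2 * t + 1) ∧
        natE (2 * t + 1) < rowVal π 2 p ∧
        (rowVal π 2 p = natE (2 * t + 2) →
          startType π p = 2 ∨ startType π p = 3) ∧
        (rowVal π 2 (p + 1) = natE (2 * t) →
          startType π (p + 1) = 0 ∨ startType π (p + 1) = 1) }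

/-- The set `C_=(k,r|p,t)`. -/
noncomputable def Ceq (k r p t : ℕ) : Set Partition :=
  { π | π ∈ C k r ∧
        (2 * t + 1) ∈ π.parts ∧
        (∀ x ∈ π.parts, x % 2 = 1 → x ≤ 2 * t + 1) ∧
        (∀ m, Marked π (2 * t + 1) m → m ≤ 2) ∧
        natE (2 * t + 2) ≤ rowVal π 2 p ∧
        rowVal π 2 (p + 1) ≤ natE (2 * t + 2) ∧
        ((∃ j, 1 ≤ j ∧ j ≤ Nmk π 2 ∧ nth π 2 j = 2 * t + 2 ∧ startType π j = 0) →
          rowVal π 2 (p + 1) = natE (2 * t + 2) ∧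
          ∃ i, 1 ≤ i ∧ i ≤ p + 1 ∧
            nth π 2 i = 2 * t + 2 + 4 * (p + 1 - i) ∧
            π.parts.count (2 * t + 2 + 4 * (p + 1 - i)) = 1) ∧
        ((∃ j, 1 ≤ j ∧ j ≤ Nmk π 2 ∧ nth π 2 j = 2 * t + 2 ∧ startType π j = 2) →
          rowVal π 2 p = natE (2 * t + 2)) ∧
        ((2 * t + 2) ∈ π.parts → ¬ Marked π (2 * t + 2) 2 →
          rowVal π 2 p = natE (2 * t + 4) ∧ startType π p = 3 ∧
          ∃ i, 1 ≤ i ∧ i ≤ p ∧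
            nth π 2 i = 2 * t + 4 + 4 * (p - i) ∧
            (2 * t + 4 + 4 * (p - i) + 2) ∉ π.parts) }

/-- The first starting cluster index `p₁` of `π` (with `p₀ = p + 1`): the least
`j ≥ 1` such that `π^{(2)}_j = π^{(2)}_p + 4(p - j)` and all of
`π^{(2)}_j, …, π^{(2)}_p` have the same starting type as `π^{(2)}_p`. -/
def firstCluster (π : Partition) (p : ℕ) : ℕ :=
  ((List.range' 1 p).filter fun j =>
    (List.range' j (p + 1 - j)).all fun i =>
      decide (nth π 2 i = nth π 2 p + 4 * (p - i)) &&
      decide (startType π i = startType π p)).headD p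

/-- The set `ℰ(k,r)` of partitions in `C(k,r)` with no odd parts. -/
def E (k r : ℕ) : Set Partition :=
  { π | π ∈ C k r ∧ ∀ x ∈ π.parts, x % 2 = 0 }

/-- `C_<(k,r|m) = ⋃_{p+t=m} C_<(k,r|p,t)`. -/
noncomputable def Cltm (k r m : ℕ) : Set Partition :=
  { π | ∃ p t, p + t = m ∧ π ∈ Clt k r p t }

/-- `C_=(k,r|m) = ⋃_{p+t=m} C_=(k,r|p,t)`. -/
noncomputable def Ceqm (k r m : ℕ) : Set Partition :=
  { π | ∃ p t, p + t = m ∧ π ∈ Ceq k r p t }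

/-- `I_N`: partitions into distinct odd parts, each at least `2N + 1`. -/
def Iset (N : ℕ) : Set Partition :=
  { ζ | (∀ x ∈ ζ.parts, x % 2 = 1 ∧ 2 * N + 1 ≤ x) ∧ ζ.parts.Nodup }

/-- `F(3,3)`: pairs `(π, ζ)` with `π ∈ ℰ(3,3)` and `ζ ∈ I_{N₂(π)}`. -/
noncomputable def F33 : Set (Partition × Partition) :=
  { pq | pq.1 ∈ E 3 3 ∧ pq.2 ∈ Iset (Nmk pq.1 2) }

theorem mex1_not_mem (s : List ℕ) : mex1 s ∉ s := (Nat.find_spec (exists_pos_not_mem s)).2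

theorem ggAux_pairwise (l : List ℕ) {acc : List (ℕ × ℕ)}
    (h : acc.Pairwise fun a b => a.2 = b.2 → conflict a.1 b.1 = false) :
    (ggAux acc l).Pairwise fun a b => a.2 = b.2 → conflict a.1 b.1 = false := by
  induction l generalizing acc with
  | nil => exact h
  | cons q rest ih =>
    refine ih (List.Pairwise.cons (fun b hb hmark => ?_) h)
    by_contra hconflict
    apply mex1_not_mem ((acc.filter fun x => conflict q x.1).map Prod.snd)
    rw [show mex1 _ = b.2 from hmark]
    exact List.mem_map_of_mem (List.mem_filter.mpr ⟨hb, by simpa using hconflict⟩)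

theorem ggAux_map_fst (l : List ℕ) (acc : List (ℕ × ℕ)) :
    (ggAux acc l).map Prod.fst = l.reverse ++ acc.map Prod.fst := by
  induction l generalizing acc with
  | nil => simp [ggAux]
  | cons q rest ih => simp [ggAux, ih]

theorem ggMarks_map_fst (π : Partition) : (ggMarks π).map Prod.fst = π.parts := by
  simp [ggMarks, ggAux_map_fst]

section Rows

variable {π : Partition} {i j j' : ℕ}

theorem row_sublist (π : Partition) (i : ℕ) : (row π i).Sublist π.parts :=
  ggMarks_map_fst π ▸ List.filter_sublist.map _

theorem row_pairwise_ge (π : Partition) (i : ℕ) : (row π i).Pairwise (· ≥ ·) :=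
  π.sorted.sublist (row_sublist π i)

theorem row_pairwise_conflict_eq_false (π : Partition) (i : ℕ) :
    (row π i).Pairwise fun a b => conflict a b = false := by
  rw [row, List.pairwise_map]
  refine ((ggAux_pairwise _ List.Pairwise.nil).filter _).imp_of_mem fun ha hb hab => hab ?_
  simp only [beq_iff_eq, List.mem_filter] at ha hb
  exact ha.2.trans hb.2.symm

theorem nth_eq_getElem (hj : 1 ≤ j) (hjN : j ≤ Nmk π i) :
    nth π i j = (row π i)[j - 1]'(by rw [Nmk] at hjN; omega) :=
  List.getD_eq_getElem ..

theorem nth_mem_parts (hj : 1 ≤ j) (hjN : j ≤ Nmk π i) : nth π i j ∈ π.parts :=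
  nth_eq_getElem hj hjN ▸ (row_sublist π i).mem (List.getElem_mem _)

theorem nth_le_nth (hj : 1 ≤ j) (hjj' : j ≤ j') (hj'N : j' ≤ Nmk π i) :
    nth π i j' ≤ nth π i j := by
  rw [nth_eq_getElem hj (hjj'.trans hj'N), nth_eq_getElem (hj.trans hjj') hj'N]
  rcases (Nat.sub_le_sub_right hjj' 1).lt_or_eq with hlt | heq
  · exact List.pairwise_iff_getElem.mp (row_pairwise_ge π i) _ _ _ _ hlt
  · simp only [heq, le_refl]

theorem conflict_nth_nth_succ_eq_false (hj : 1 ≤ j) (hjN : j + 1 ≤ Nmk π i) :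
    conflict (nth π i j) (nth π i (j + 1)) = false := by
  rw [nth_eq_getElem hj (by omega), nth_eq_getElem (by omega) hjN]
  exact List.pairwise_iff_getElem.mp (row_pairwise_conflict_eq_false π i) _ _ _ _ (by omega)

theorem natE_lt_natE {a b : ℕ} : natE a < natE b ↔ a < b := by
  unfold natE; exact_mod_cast Iff.rfl

theorem rowVal_eq_natE_nth (hj : 1 ≤ j) (hjN : j ≤ Nmk π i) :
    rowVal π i j = natE (nth π i j) := by
  rw [rowVal, if_neg (by omega), nth_eq_getElem hj hjN, List.getElem?_eq_getElem]

theorem le_Nmk_of_natE_lt_rowVal {c : ℕ} (h : natE c < rowVal π i j) : j ≤ Nmk π i := by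
  by_contra! hj
  rw [rowVal, if_neg (by omega), List.getElem?_eq_none (by rw [Nmk] at hj; omega)] at h
  exact not_lt_bot h

end Rows

theorem add_lt_of_conflict_eq_false {a b : ℕ} (ha : a % 2 = 0) (h : conflict a b = false) :
    b + 2 < a := by
  simp only [conflict, if_neg (by omega : ¬a % 2 = 1), decide_eq_false_iff_not] at h
  omega

theorem add_mul_le_of_forall_succ_add_le {f : ℕ → ℕ} {d i j : ℕ} (hij : i ≤ j)
    (h : ∀ k, i ≤ k → k < j → f (k + 1) + d ≤ f k) : f j + d * (j - i) ≤ f i := by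
  induction j, hij using Nat.le_induction with
  | base => simp
  | succ j hij ih =>
    have hstep := h j hij (by omega)
    have hprev := ih fun k hk hkj => h k hk (by omega)
    rw [Nat.sub_add_comm hij, Nat.mul_succ]
    omega

/-- Between indices `p' + 1` and `p` the row of `2`-marked parts only holds even parts (they
exceed every odd part), and these drop by at least `4` at each step, whereas `2t + 1` only grows
by `2` as `p` decreases by one. -/
theorem Clt_adjacent_of_lt {k r p t p' t' : ℕ} {π : Partition} (hπ : π ∈ Clt k r p t)
    (hπ' : π ∈ Clt k r p' t') (hlt : p' < p) (hsum : p + t = p' + t') :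
    p = p' + 1 ∧ rowVal π 2 p = natE (2 * t + 2) ∧ rowVal π 2 (p' + 1) = natE (2 * t') := by
  obtain ⟨-, hodd, -, hlow, -, -⟩ := hπ
  obtain ⟨-, -, hhigh', -, -, -⟩ := hπ'
  have hpN : p ≤ Nmk π 2 := le_Nmk_of_natE_lt_rowVal hlow
  rw [rowVal_eq_natE_nth (by omega) hpN, natE_lt_natE] at hlow
  rw [rowVal_eq_natE_nth (by omega) (by omega), natE_lt_natE] at hhigh'
  have heven : ∀ n, 1 ≤ n → n ≤ p → nth π 2 n % 2 = 0 := fun n hn hnp => by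
    have hle := nth_le_nth (i := 2) hn hnp hpN
    have hlt := hodd _ (nth_mem_parts hn (hnp.trans hpN))
    omega
  have hgap : nth π 2 p + 4 * (p - (p' + 1)) ≤ nth π 2 (p' + 1) := by
    refine add_mul_le_of_forall_succ_add_le (f := nth π 2) (by omega) fun n hn hnp => ?_
    have hcur := heven n (by omega) hnp.le
    have hdrop := add_lt_of_conflict_eq_false hcur
      (conflict_nth_nth_succ_eq_false (by omega) (by omega))
    have hnext := heven (n + 1) (by omega) hnp
    omega
  have hp : p = p' + 1 := by omega
  have hv : nth π 2 p = 2 * t + 2 := by omega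
  refine ⟨hp, ?_, ?_⟩
  · rw [rowVal_eq_natE_nth (by omega) hpN, hv]
  · rw [← hp, rowVal_eq_natE_nth (by omega) hpN, hv]
    congr 1
    omega

/-- At the only possible overlap the part `π^{(2)}_p = 2t + 2 = 2t'` would have to be of starting
type `s₂` or `s₃` and of starting type `s₀` or `s₁` at once. -/
theorem not_mem_Clt_of_lt {k r p t p' t' : ℕ} {π : Partition} (hπ : π ∈ Clt k r p t)
    (hlt : p' < p) (hsum : p + t = p' + t') : π ∉ Clt k r p' t' := fun hπ' => by
  obtain ⟨hp, hhigh, hlow'⟩ := Clt_adjacent_of_lt hπ hπ' hlt hsum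
  have htype := hπ.2.2.2.2.1 hhigh
  have htype' := hπ'.2.2.2.2.2 hlow'
  rw [← hp] at htype'
  omega

theorem Clt_pair_unique_general (k r m p t : ℕ)
    (hm : p + t = m) (π : Partition) (hπ : π ∈ Clt k r p t) :
    ¬ ∃ p' t' : ℕ, p' ≠ p ∧ t' ≠ t ∧ p' + t' = m ∧ π ∈ Clt k r p' t' := by
  rintro ⟨p', t', hp', -, hm', hπ'⟩
  rcases Nat.lt_or_gt_of_ne hp' with hlt | hlt
  · exact not_mem_Clt_of_lt hπ hlt (by omega) hπ'
  · exact not_mem_Clt_of_lt hπ' hlt (by omega) hπ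

/-- Proposition 5.1: the pair `(p,t)` with `p + t = m` and
`π ∈ C_<(k,r|p,t)` is unique. -/
theorem Clt_pair_unique (k r m p t : ℕ) (hrk : r ≤ k) (hr : 3 ≤ r)
    (hm : p + t = m) (π : Partition) (hπ : π ∈ Clt k r p t) :
    ¬ ∃ p' t' : ℕ, p' ≠ p ∧ t' ≠ t ∧ p' + t' = m ∧ π ∈ Clt k r p' t' :=
  Clt_pair_unique_general k r m p t hm π hπ

end Bressoud
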